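/- Let b̄_i > 0 and b̲_i > 0 for i = 1, …, n, and consider the open box Ω = {u ∈ ℝ^n : −b̲_i < u_i < b̄_i for all i}. Set m = min_i 8/(b̄_i + b̲_i)². Then for every u ∈ Ω and every x ∈ ℝ^n, ∑_{i=1}^{n} x_i² (1/(b̄_i − u_i)² + 1/(b̲_i + u_i)²) ≥ m‖x‖², and the constant m is optimal: there exist u ∈ Ω and a unit vector x achieving equality. -/

import Mathlib

/-! Coordinatewise, `1/a² + 1/b² ≥ 2/(ab) ≥ 8/(a+b)²` for `a, b > 0`, with equality iff `a = b`.
Taking `a = b̄ᵢ - uᵢ` and `b = b̲ᵢ + uᵢ`, so that `a + b = b̄ᵢ + b̲ᵢ`, every diagonal entry of the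
Hessian is at least `m`; equality holds at the centre of the box along a coordinate direction
`eⱼ` for which `8/(b̄ⱼ + b̲ⱼ)²` is minimal. -/

open Finset

lemma eight_div_add_sq_le_one_div_sq_add_one_div_sq {a b : ℝ} (ha : 0 < a) (hb : 0 < b) :
    8 / (a + b) ^ 2 ≤ 1 / a ^ 2 + 1 / b ^ 2 :=
  calc 8 / (a + b) ^ 2
      ≤ 8 / (4 * (a * b)) := by
        gcongr
        nlinarith [sq_nonneg (a - b)]
    _ = 2 * (1 / a) * (1 / b) := by field_simp; norm_num
    _ ≤ (1 / a) ^ 2 + (1 / b) ^ 2 := two_mul_le_add_sq _ _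
    _ = 1 / a ^ 2 + 1 / b ^ 2 := by rw [one_div_pow, one_div_pow]

lemma one_div_sq_add_one_div_sq_half {s : ℝ} (hs : s ≠ 0) :
    1 / (s / 2) ^ 2 + 1 / (s / 2) ^ 2 = 8 / s ^ 2 := by
  field_simp
  norm_num

lemma EuclideanSpace.mul_norm_sq_le_sum_sq_mul {ι : Type*} [Fintype ι] {w : ι → ℝ} {c : ℝ}
    (hw : ∀ i, c ≤ w i) (x : EuclideanSpace ℝ ι) :
    c * ‖x‖ ^ 2 ≤ ∑ i, x i ^ 2 * w i := by
  rw [EuclideanSpace.real_norm_sq_eq, mul_sum]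
  refine sum_le_sum fun i _ => ?_
  rw [mul_comm]
  exact mul_le_mul_of_nonneg_left (hw i) (sq_nonneg _)

lemma EuclideanSpace.sum_single_one_sq_mul {ι : Type*} [Fintype ι] [DecidableEq ι]
    (w : ι → ℝ) (j : ι) :
    ∑ i, EuclideanSpace.single j (1 : ℝ) i ^ 2 * w i = w j := by
  rw [sum_eq_single j (fun i _ hij => by simp [hij])
    (fun hj => absurd (mem_univ j) hj)]
  simp

theorem box_barrier_strong_convexity_constant {n : ℕ} (hn : 0 < n)
    (bU bL : Fin n → ℝ) (hbU : ∀ i, 0 < bU i) (hbL : ∀ i, 0 < bL i) :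
    (∀ u : EuclideanSpace ℝ (Fin n), (∀ i, -bL i < u i ∧ u i < bU i) →
      ∀ x : EuclideanSpace ℝ (Fin n),
        (⨅ i, 8 / (bU i + bL i) ^ 2) * ‖x‖ ^ 2 ≤
          ∑ i, (x i) ^ 2 * (1 / (bU i - u i) ^ 2 + 1 / (bL i + u i) ^ 2)) ∧
    ∃ u : EuclideanSpace ℝ (Fin n), (∀ i, -bL i < u i ∧ u i < bU i) ∧
      ∃ x : EuclideanSpace ℝ (Fin n), ‖x‖ = 1 ∧
        ∑ i, (x i) ^ 2 * (1 / (bU i - u i) ^ 2 + 1 / (bL i + u i) ^ 2) =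
          ⨅ i, 8 / (bU i + bL i) ^ 2 := by
  have : Nonempty (Fin n) := ⟨⟨0, hn⟩⟩
  have hbdd : BddBelow (Set.range fun i => 8 / (bU i + bL i) ^ 2) :=
    (Set.finite_range _).bddBelow
  refine ⟨fun u hu x => EuclideanSpace.mul_norm_sq_le_sum_sq_mul (fun i => ?_) x, ?_⟩
  · refine (ciInf_le hbdd i).trans ?_
    have hsum : bU i - u i + (bL i + u i) = bU i + bL i := by ring
    rw [← hsum]
    exact eight_div_add_sq_le_one_div_sq_add_one_div_sq
      (by linarith [(hu i).2]) (by linarith [(hu i).1])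
  · obtain ⟨j, hj⟩ := exists_eq_ciInf_of_finite (f := fun i => 8 / (bU i + bL i) ^ 2)
    let centre : EuclideanSpace ℝ (Fin n) := WithLp.toLp 2 fun i => (bU i - bL i) / 2
    have hU (i : Fin n) : bU i - centre i = (bU i + bL i) / 2 := by simp [centre]; ring
    have hL (i : Fin n) : bL i + centre i = (bU i + bL i) / 2 := by simp [centre]; ring
    refine ⟨centre, fun i => ⟨?_, ?_⟩, EuclideanSpace.single j 1, by simp, ?_⟩
    · linarith [hL i, hbU i, hbL i]
    · linarith [hU i, hbU i, hbL i]
    · simp only [hU, hL]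
      rw [EuclideanSpace.sum_single_one_sq_mul, ← hj]
      exact one_div_sq_add_one_div_sq_half (by linarith [hbU j, hbL j])
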